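/- Let G ⊆ ℂⁿ be a domain and p : G → ℝ₊ a function whose support |p| := {a ∈ G : p(a) > 0} is finite. Then for every z₀ ∈ G there exists an extremal function for d_G^min(p, z₀): a holomorphic f : G → E with f(z₀) = 0 and ∏_{μ∈f(G)} |μ|^{sup p(f⁻¹(μ))} = d_G^min(p, z₀). -/

import Mathlib

open Complex Set Filter Asymptotics
open scoped ENNReal

noncomputable section

/-- The open unit disc `E ⊆ ℂ`. -/
def discE : Set ℂ := {z : ℂ | ‖z‖ < 1}

/-- The Möbius function `m_E(a,z) = |(z-a)/(1 - conj a · z)|`. -/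
def mE (a z : ℂ) : ℝ := ‖(z - a) / (1 - (starRingEnd ℂ) a * z)‖

/-- A domain: a nonempty open connected set. -/
def IsDom {V : Type*} [NormedAddCommGroup V] [NormedSpace ℂ V] (G : Set V) : Prop :=
  IsOpen G ∧ IsConnected G

variable {V W : Type*} [NormedAddCommGroup V] [NormedSpace ℂ V]
  [NormedAddCommGroup W] [NormedSpace ℂ W]

/-- `ord_a f ≥ k` : `f(w) = O(‖w - a‖^k)` as `w → a`. -/
def OrdGE (f : V → ℂ) (a : V) (k : ℕ) : Prop :=
  f =O[nhds a] fun w => ‖w - a‖ ^ k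

/-- The generalized Möbius function `m_G(p, z)` with integer weights `p`. -/
def mFun (G : Set V) (p : V → ℕ) (z : V) : ℝ :=
  sSup {r : ℝ | ∃ f : V → ℂ, DifferentiableOn ℂ f G ∧ MapsTo f G discE ∧
    (∀ a ∈ G, OrdGE f a (p a)) ∧ r = ‖f z‖}

/-- The Lempert function `k̃*_G(a,z)`. -/
def lemp (G : Set V) (a z : V) : ℝ :=
  sInf {r : ℝ | ∃ μ ∈ discE, ∃ φ : ℂ → V, DifferentiableOn ℂ φ discE ∧
    MapsTo φ discE G ∧ φ 0 = a ∧ φ μ = z ∧ r = ‖μ‖}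

/-- `d_G^max(p,z) = inf { k̃*_G(a,z) ^ p(a) : a ∈ G }` (real exponents). -/
def dMax (G : Set V) (p : V → ℝ) (z : V) : ℝ :=
  sInf {r : ℝ | ∃ a ∈ G, r = lemp G a z ^ p a}

/-- Possibly infinite product `∏_{a ∈ A} h a`, defined as the infimum of finite subproducts. -/
def infProd {α : Type*} (A : Set α) (h : α → ℝ) : ℝ :=
  sInf {r : ℝ | ∃ B : Finset α, ↑B ⊆ A ∧ r = ∏ a ∈ B, h a}

/-- `sup p (f⁻¹(μ))`, the supremum of the weights on the fiber over `μ`, in `[0,∞]`. -/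
def fiberSup (G : Set V) (p : V → ℝ) (f : V → ℂ) (μ : ℂ) : ℝ≥0∞ :=
  ⨆ a ∈ {a ∈ G | f a = μ}, ENNReal.ofReal (p a)

/-- The factor `|μ| ^ (sup p (f⁻¹(μ)))`, equal to `0` when the exponent is infinite. -/
def minTerm (G : Set V) (p : V → ℝ) (f : V → ℂ) (μ : ℂ) : ℝ :=
  if fiberSup G p f μ = ⊤ then 0 else ‖μ‖ ^ (fiberSup G p f μ).toReal

/-- `d_G^min(p,z) = sup { ∏_{μ ∈ f(G)} |μ| ^ (sup p (f⁻¹(μ))) : f ∈ O(G,E), f(z) = 0 }`. -/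
def dMin (G : Set V) (p : V → ℝ) (z : V) : ℝ :=
  sSup {r : ℝ | ∃ f : V → ℂ, DifferentiableOn ℂ f G ∧ MapsTo f G discE ∧
    f z = 0 ∧ r = infProd (f '' G) (minTerm G p f)}

/-- The unit disc viewed as a domain in `ℂ¹ = (Fin 1 → ℂ)`. -/
def E1 : Set (Fin 1 → ℂ) := {z : Fin 1 → ℂ | ‖z 0‖ < 1}

open Metric
open scoped Topology

section AuxExtremal

variable {n : ℕ}

/-- Slice derivative bound: directional derivative estimate via one-variable Schwarz. -/
lemma slice_deriv_bound {g : (Fin n → ℂ) → ℂ} {z v : Fin n → ℂ} {R M : ℝ}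
    (hR : 0 < R) (hM : 0 ≤ M) (hv : ‖v‖ ≤ 1)
    (hd : DifferentiableOn ℂ g (ball z R)) (hb : ∀ w ∈ ball z R, ‖g w‖ ≤ M) :
    ‖fderiv ℂ g z v‖ ≤ 2 * M / R := by
  set L := fderiv ℂ g z with hL
  set A : ℂ → (Fin n → ℂ) := fun ζ => z + ζ • v with hA
  have hA0 : A 0 = z := by simp [hA]
  have hmapsA : MapsTo A (ball 0 R) (ball z R) := by
    intro ζ hζ
    simp only [mem_ball, dist_eq_norm, hA, add_sub_cancel_left, norm_smul] at hζ ⊢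
    calc ‖ζ‖ * ‖v‖ ≤ ‖ζ‖ * 1 := by
          exact mul_le_mul_of_nonneg_left hv (norm_nonneg _)
      _ = ‖ζ - 0‖ := by simp
      _ < R := hζ
  have hdA : DifferentiableOn ℂ A (ball 0 R) :=
    ((differentiable_id.smul_const v).const_add z).differentiableOn
  set h : ℂ → ℂ := fun ζ => g (A ζ) with hh
  have hdh : DifferentiableOn ℂ h (ball 0 R) := hd.comp hdA hmapsA
  have hgz : DifferentiableAt ℂ g z := hd.differentiableAt (ball_mem_nhds z hR)
  have hderA : HasDerivAt A v 0 := by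
    have : HasDerivAt (fun ζ : ℂ => ζ • v) ((1 : ℂ) • v) 0 := (hasDerivAt_id 0).smul_const v
    simpa [hA, one_smul] using this.const_add z
  have hgz' : HasFDerivAt g L (A 0) := hA0.symm ▸ hgz.hasFDerivAt
  have hderh : HasDerivAt h (L v) 0 := by
    exact hgz'.comp_hasDerivAt 0 hderA
  have key : ∀ ε > (0:ℝ), ‖L v‖ ≤ (2 * M + ε) / R := by
    intro ε hε
    have hmapsh : MapsTo h (ball 0 R) (ball (h 0) (2 * M + ε)) := by
      intro ζ hζ
      have h1 : ‖g (A ζ)‖ ≤ M := hb _ (hmapsA hζ)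
      have h2 : ‖g (A 0)‖ ≤ M := hb _ (hmapsA (mem_ball_self hR))
      simp only [mem_ball, dist_eq_norm, hh]
      calc ‖g (A ζ) - g (A 0)‖ ≤ ‖g (A ζ)‖ + ‖g (A 0)‖ := norm_sub_le _ _
        _ ≤ M + M := add_le_add h1 h2
        _ < 2 * M + ε := by linarith
    have := Complex.norm_deriv_le_div_of_mapsTo_ball hdh (hmapsh.mono_right ball_subset_closedBall) hR
    rwa [hderh.deriv] at this
  have : ∀ ε > (0:ℝ), ‖L v‖ ≤ 2 * M / R + ε := by
    intro ε hε
    have := key (ε * R) (by positivity)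
    calc ‖L v‖ ≤ (2 * M + ε * R) / R := this
      _ = 2 * M / R + ε := by field_simp
  exact le_of_forall_pos_le_add this

/-- Operator norm bound for the Fréchet derivative of a bounded holomorphic function. -/
lemma fderiv_norm_bound {g : (Fin n → ℂ) → ℂ} {z : Fin n → ℂ} {R M : ℝ}
    (hR : 0 < R) (hM : 0 ≤ M)
    (hd : DifferentiableOn ℂ g (ball z R)) (hb : ∀ w ∈ ball z R, ‖g w‖ ≤ M) :
    ‖fderiv ℂ g z‖ ≤ 2 * n * M / R := by
  refine ContinuousLinearMap.opNorm_le_bound _ (by positivity) fun v => ?_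
  set L := fderiv ℂ g z with hL
  set e : Fin n → (Fin n → ℂ) := fun i => Pi.single i 1 with he
  have hv : v = ∑ i : Fin n, v i • e i := by
    funext j
    simp [he, Pi.single_apply, Finset.sum_apply]
  calc ‖L v‖ = ‖∑ i : Fin n, v i • L (e i)‖ := by
        conv_lhs => rw [hv]
        rw [map_sum]
        simp
    _ ≤ ∑ i : Fin n, ‖v i • L (e i)‖ := norm_sum_le _ _
    _ ≤ ∑ i : Fin n, ‖v‖ * (2 * M / R) := by
        refine Finset.sum_le_sum fun i _ => ?_
        rw [norm_smul]
        have h1 : ‖v i‖ ≤ ‖v‖ := norm_le_pi_norm v i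
        have h2 : ‖L (e i)‖ ≤ 2 * M / R :=
          slice_deriv_bound hR hM (by rw [he]; rw [Pi.norm_single]; simp) hd hb
        exact mul_le_mul h1 h2 (norm_nonneg _) (norm_nonneg _)
    _ = 2 * n * M / R * ‖v‖ := by
        rw [Finset.sum_const, Finset.card_univ, Fintype.card_fin, nsmul_eq_mul]
        ring

/-- Local Lipschitz estimate for holomorphic functions bounded by 1. -/
lemma lip_bound {g : (Fin n → ℂ) → ℂ} {z w : Fin n → ℂ} {R : ℝ}
    (hR : 0 < R)
    (hd : DifferentiableOn ℂ g (ball z R)) (hb : ∀ u ∈ ball z R, ‖g u‖ ≤ 1)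
    (hw : w ∈ ball z R) :
    dist (g w) (g z) ≤ 3 / R * dist w z := by
  rcases eq_or_ne w z with rfl | hne
  · simp
  set v : Fin n → ℂ := w - z with hv
  have hv0 : ‖v‖ ≠ 0 := by simpa [hv, sub_eq_zero] using hne
  have hvpos : 0 < ‖v‖ := (norm_nonneg v).lt_of_ne' hv0
  have hvR : ‖v‖ < R := by simpa [hv, dist_eq_norm] using hw
  set A : ℂ → (Fin n → ℂ) := fun ζ => z + ζ • v with hA
  have hmapsA : MapsTo A (ball 0 (R / ‖v‖)) (ball z R) := by
    intro ζ hζ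
    simp only [mem_ball, dist_eq_norm, hA, add_sub_cancel_left, norm_smul] at hζ ⊢
    have : ‖ζ - 0‖ < R / ‖v‖ := hζ
    rw [sub_zero] at this
    calc ‖ζ‖ * ‖v‖ < R / ‖v‖ * ‖v‖ := by
          exact mul_lt_mul_of_pos_right this hvpos
      _ = R := by field_simp
  set h : ℂ → ℂ := fun ζ => g (A ζ) with hh
  have hdh : DifferentiableOn ℂ h (ball 0 (R / ‖v‖)) :=
    hd.comp (((differentiable_id.smul_const v).const_add z).differentiableOn) hmapsA
  have hmapsh : MapsTo h (ball 0 (R / ‖v‖)) (ball (h 0) 3) := by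
    intro ζ hζ
    have h1 : ‖g (A ζ)‖ ≤ 1 := hb _ (hmapsA hζ)
    have h2 : ‖g (A 0)‖ ≤ 1 := hb _ (hmapsA (mem_ball_self (by positivity)))
    simp only [mem_ball, dist_eq_norm, hh]
    calc ‖g (A ζ) - g (A 0)‖ ≤ ‖g (A ζ)‖ + ‖g (A 0)‖ := norm_sub_le _ _
      _ ≤ 1 + 1 := add_le_add h1 h2
      _ < 3 := by norm_num
  have h1mem : (1:ℂ) ∈ ball (0:ℂ) (R / ‖v‖) := by
    simp only [mem_ball, dist_zero_right, norm_one]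
    rw [lt_div_iff₀ hvpos, one_mul]
    exact hvR
  have := Complex.dist_le_div_mul_dist_of_mapsTo_ball hdh (hmapsh.mono_right ball_subset_closedBall) h1mem
  have hA1 : A 1 = w := by simp [hA, hv]
  have hA0 : A 0 = z := by simp [hA]
  rw [hh] at this
  simp only [hA1, hA0] at this
  calc dist (g w) (g z) ≤ 3 / (R / ‖v‖) * dist (1:ℂ) 0 := this
    _ = 3 / R * dist w z := by
        rw [dist_zero_right, norm_one, mul_one, div_div_eq_mul_div]
        rw [dist_eq_norm, ← hv]
        ring

set_option synthInstance.maxHeartbeats 1000000 in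
instance clm_proper (n : ℕ) : ProperSpace ((Fin n → ℂ) →L[ℂ] ℂ) := inferInstance

/-- Montel-type normal family limit along an ultrafilter. -/
lemma montel_limit {G : Set (Fin n → ℂ)} (hGo : IsOpen G) (U : Ultrafilter ℕ)
    (F : ℕ → (Fin n → ℂ) → ℂ) (hdF : ∀ k, DifferentiableOn ℂ (F k) G)
    (hbF : ∀ k, ∀ z ∈ G, ‖F k z‖ ≤ 1) :
    ∃ f : (Fin n → ℂ) → ℂ, DifferentiableOn ℂ f G ∧ (∀ z ∈ G, ‖f z‖ ≤ 1) ∧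
      ∀ z ∈ G, Tendsto (fun k => F k z) (U : Filter ℕ) (𝓝 (f z)) := by
  -- pointwise ultrafilter limits
  have hpt : ∀ z : Fin n → ℂ, ∃ c : ℂ, z ∈ G →
      ‖c‖ ≤ 1 ∧ Tendsto (fun k => F k z) (U : Filter ℕ) (𝓝 c) := by
    intro z
    by_cases hz : z ∈ G
    · have hmem : closedBall (0:ℂ) 1 ∈ (U.map (fun k => F k z)) := by
        refine Ultrafilter.mem_map.2 ?_
        have : ∀ k, F k z ∈ closedBall (0:ℂ) 1 := fun k => by
          simpa [mem_closedBall, dist_zero_right] using hbF k z hz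
        exact Filter.univ_mem' this
      obtain ⟨c, hc, hlim⟩ := (isCompact_closedBall (0:ℂ) 1).ultrafilter_le_nhds
        (U.map (fun k => F k z)) (le_principal_iff.2 hmem)
      exact ⟨c, fun _ => ⟨by simpa [mem_closedBall, dist_zero_right] using hc, hlim⟩⟩
    · exact ⟨0, fun h => absurd h hz⟩
  choose f hf using hpt
  have hfb : ∀ z ∈ G, ‖f z‖ ≤ 1 := fun z hz => (hf z hz).1
  have hfl : ∀ z ∈ G, Tendsto (fun k => F k z) (U : Filter ℕ) (𝓝 (f z)) :=
    fun z hz => (hf z hz).2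
  refine ⟨f, ?_, hfb, hfl⟩
  -- differentiability at each point c ∈ G
  intro c hc
  obtain ⟨ε, hε, hball⟩ := Metric.isOpen_iff.1 hGo c hc
  set R : ℝ := ε / 4 with hRdef
  have hR : 0 < R := by positivity
  have hsub3 : closedBall c (3 * R) ⊆ G := by
    refine Subset.trans ?_ hball
    intro x hx
    rw [mem_closedBall] at hx
    rw [mem_ball]
    calc dist x c ≤ 3 * R := hx
      _ < ε := by rw [hRdef]; linarith
  have hsub2 : closedBall c (2 * R) ⊆ G := by
    refine Subset.trans (closedBall_subset_closedBall ?_) hsub3; linarith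
  have hball2G : ∀ z ∈ closedBall c (2 * R), ball z R ⊆ G := by
    intro z hz
    refine Subset.trans ?_ hsub3
    intro w hw
    rw [mem_ball] at hw
    rw [mem_closedBall]
    calc dist w c ≤ dist w z + dist z c := dist_triangle _ _ _
      _ ≤ R + 2 * R := add_le_add hw.le (mem_closedBall.1 hz)
      _ = 3 * R := by ring
  -- the limit function satisfies the same Lipschitz bound
  have hflip : ∀ z ∈ closedBall c (2 * R), ∀ w ∈ ball z R,
      dist (f w) (f z) ≤ 3 / R * dist w z := by
    intro z hz w hw
    have hzG : z ∈ G := hsub2 hz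
    have hwG : w ∈ G := hball2G z hz hw
    have hlim : Tendsto (fun k => dist (F k w) (F k z)) (U : Filter ℕ)
        (𝓝 (dist (f w) (f z))) := (hfl w hwG).dist (hfl z hzG)
    refine le_of_tendsto hlim (Eventually.of_forall fun k => ?_)
    exact lip_bound hR ((hdF k).mono (hball2G z hz))
      (fun u hu => hbF k u (hball2G z hz hu)) hw
  -- uniform convergence on closedBall c (2R) along U
  have hunif : ∀ ε' > (0:ℝ), ∀ᶠ k in (U : Filter ℕ),
      ∀ z ∈ closedBall c (2 * R), dist (F k z) (f z) < ε' := by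
    intro ε' hε'
    set δ : ℝ := min R (ε' * R / 10) with hδdef
    have hδ : 0 < δ := by
      apply lt_min hR; positivity
    obtain ⟨t, htsub, htfin, htcov⟩ := totallyBounded_iff_subset.1
      (isCompact_closedBall c (2 * R)).totallyBounded
      {p : (Fin n → ℂ) × (Fin n → ℂ) | dist p.1 p.2 < δ} (dist_mem_uniformity hδ)
    have hev : ∀ᶠ k in (U : Filter ℕ), ∀ y ∈ t, dist (F k y) (f y) < ε' / 3 := by
      rw [htfin.eventually_all]
      intro y hy
      have hyG : y ∈ G := hsub2 (htsub hy)
      have := (hfl y hyG)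
      exact (Metric.tendsto_nhds.1 this (ε' / 3) (by positivity)).mono
        (fun k hk => hk)
    refine hev.mono fun k hk z hz => ?_
    obtain ⟨y, hy, hzy⟩ : ∃ y ∈ t, dist z y < δ := by
      have := htcov hz
      simp only [mem_iUnion, exists_prop] at this
      obtain ⟨y, hy, hzy⟩ := this
      exact ⟨y, hy, hzy⟩
    have hyB : y ∈ closedBall c (2 * R) := htsub hy
    have hzball : z ∈ ball y R := by
      rw [mem_ball]; exact lt_of_lt_of_le hzy (min_le_left _ _)
    have h1 : dist (F k z) (F k y) ≤ 3 / R * dist z y :=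
      lip_bound hR ((hdF k).mono (hball2G y hyB))
        (fun u hu => hbF k u (hball2G y hyB hu)) hzball
    have h3 : dist (f z) (f y) ≤ 3 / R * dist z y := hflip y hyB z hzball
    have hδ2 : 3 / R * dist z y ≤ 3 * ε' / 10 := by
      have : dist z y ≤ ε' * R / 10 := le_trans hzy.le (min_le_right _ _)
      calc 3 / R * dist z y ≤ 3 / R * (ε' * R / 10) := by
            exact mul_le_mul_of_nonneg_left this (by positivity)
        _ = 3 * ε' / 10 := by field_simp
    calc dist (F k z) (f z) ≤ dist (F k z) (F k y) + dist (F k y) (f y) + dist (f y) (f z) :=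
          dist_triangle4 _ _ _ _
      _ < 3 * ε' / 10 + ε' / 3 + 3 * ε' / 10 := by
          have := hk y hy
          rw [dist_comm (f y) (f z)]
          exact add_lt_add_of_lt_of_le (add_lt_add_of_le_of_lt (le_trans h1 hδ2) this)
            (le_trans h3 hδ2)
      _ ≤ ε' := by linarith
  -- pointwise limits of derivatives on ball c R
  have hdiffAt : ∀ k, ∀ z ∈ closedBall c (2 * R), DifferentiableAt ℂ (F k) z := by
    intro k z hz
    exact (hdF k).differentiableAt (hGo.mem_nhds (hsub2 hz))
  have hballz : ∀ z ∈ ball c R, ball z R ⊆ closedBall c (2 * R) := by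
    intro z hz w hw
    rw [mem_ball] at hw hz
    rw [mem_closedBall]
    calc dist w c ≤ dist w z + dist z c := dist_triangle _ _ _
      _ ≤ R + R := add_le_add hw.le hz.le
      _ ≤ 2 * R := by linarith
  have hdint : ∀ k, ∀ z ∈ ball c R, ‖fderiv ℂ (F k) z‖ ≤ 2 * n * 1 / R := by
    intro k z hz
    refine fderiv_norm_bound hR zero_le_one
      ((hdF k).mono (Subset.trans (hballz z hz) hsub2)) ?_
    exact fun w hw => hbF k w (hsub2 (hballz z hz hw))
  have hpt' : ∀ z : Fin n → ℂ, ∃ L : (Fin n → ℂ) →L[ℂ] ℂ, z ∈ ball c R →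
      Tendsto (fun k => fderiv ℂ (F k) z) (U : Filter ℕ) (𝓝 L) := by
    intro z
    by_cases hz : z ∈ ball c R
    · have hmem : closedBall (0:(Fin n → ℂ) →L[ℂ] ℂ) (2 * n * 1 / R) ∈
          (U.map (fun k => fderiv ℂ (F k) z)) := by
        refine Ultrafilter.mem_map.2 (Filter.univ_mem' fun k => ?_)
        simpa [mem_closedBall, dist_zero_right] using hdint k z hz
      obtain ⟨L, _, hlim⟩ := (isCompact_closedBall (0:(Fin n → ℂ) →L[ℂ] ℂ) _).ultrafilter_le_nhds
        (U.map (fun k => fderiv ℂ (F k) z)) (le_principal_iff.2 hmem)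
      exact ⟨L, fun _ => hlim⟩
    · exact ⟨0, fun h => absurd h hz⟩
  choose f' hf' using hpt'
  -- uniform convergence of derivatives on ball c R
  have hunifd : TendstoUniformlyOn (fun k z => fderiv ℂ (F k) z) f' (U : Filter ℕ)
      (ball c R) := by
    rw [Metric.tendstoUniformlyOn_iff]
    intro ε' hε'
    set ε₁ : ℝ := ε' * R / (8 * (n + 1)) with hε₁def
    have hε₁ : 0 < ε₁ := by positivity
    have hCauchy : ∀ k m : ℕ,
        (∀ z ∈ closedBall c (2 * R), dist (F k z) (f z) < ε₁) →
        (∀ z ∈ closedBall c (2 * R), dist (F m z) (f z) < ε₁) →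
        ∀ z ∈ ball c R, dist (fderiv ℂ (F k) z) (fderiv ℂ (F m) z) ≤ 2 * n * (2 * ε₁) / R := by
      intro k m hk hm z hz
      have hsubz : ball z R ⊆ closedBall c (2 * R) := hballz z hz
      have hdg : DifferentiableOn ℂ (F k - F m) (ball z R) :=
        (((hdF k).mono (Subset.trans hsubz hsub2)).sub ((hdF m).mono
          (Subset.trans hsubz hsub2)))
      have hbg : ∀ w ∈ ball z R, ‖(F k - F m) w‖ ≤ 2 * ε₁ := by
        intro w hw
        have h1 := hk w (hsubz hw)
        have h2 := hm w (hsubz hw)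
        calc ‖(F k - F m) w‖ = dist (F k w) (F m w) := by
              simp [dist_eq_norm]
          _ ≤ dist (F k w) (f w) + dist (f w) (F m w) := dist_triangle _ _ _
          _ ≤ 2 * ε₁ := by rw [dist_comm (f w)]; linarith
      have := fderiv_norm_bound hR (by positivity) hdg hbg
      have heq : fderiv ℂ (F k - F m) z = fderiv ℂ (F k) z - fderiv ℂ (F m) z :=
        fderiv_sub (hdiffAt k z (hsubz (mem_ball_self hR)))
          (hdiffAt m z (hsubz (mem_ball_self hR)))
      rw [heq] at this
      rwa [dist_eq_norm]
    refine (hunif ε₁ hε₁).mono fun k hk z hz => ?_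
    have hlim : Tendsto (fun m => dist (fderiv ℂ (F m) z) (fderiv ℂ (F k) z)) (U : Filter ℕ)
        (𝓝 (dist (f' z) (fderiv ℂ (F k) z))) := (hf' z hz).dist tendsto_const_nhds
    have hev : ∀ᶠ m in (U : Filter ℕ),
        dist (fderiv ℂ (F m) z) (fderiv ℂ (F k) z) ≤ 2 * n * (2 * ε₁) / R :=
      (hunif ε₁ hε₁).mono fun m hm => hCauchy m k hm hk z hz
    have hle : dist (f' z) (fderiv ℂ (F k) z) ≤ 2 * n * (2 * ε₁) / R :=
      le_of_tendsto hlim hev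
    calc dist (f' z) (fderiv ℂ (F k) z) ≤ 2 * n * (2 * ε₁) / R := hle
      _ = ε' * (n / (2 * (n + 1))) := by
          rw [hε₁def]; field_simp; ring
      _ < ε' := by
          have h1 : (n : ℝ) / (2 * (n + 1)) < 1 := by
            rw [div_lt_one (by positivity)]
            have : (0:ℝ) < n + 1 := by positivity
            linarith
          calc ε' * (n / (2 * (n + 1))) < ε' * 1 := by
                exact mul_lt_mul_of_pos_left h1 hε'
            _ = ε' := mul_one _
  -- conclude differentiability at c
  have := hasFDerivAt_of_tendstoUniformlyOn (isOpen_ball) hunifd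
    (fun k x hx => (hdiffAt k x (hballz x hx (mem_ball_self hR))).hasFDerivAt)
    (fun x hx => hfl x (hsub2 (hballz x hx (mem_ball_self hR)))) (mem_ball_self hR)
  exact this.differentiableAt.differentiableWithinAt

end AuxExtremal

section AuxProd

section ProdLemmas

lemma prod_le_prod_of_subset' {β : Type*} {s t : Finset β} {g : β → ℝ} (hst : s ⊆ t)
    (h0 : ∀ μ ∈ t, 0 ≤ g μ) (h1 : ∀ μ ∈ t, μ ∉ s → g μ ≤ 1) :
    ∏ μ ∈ t, g μ ≤ ∏ μ ∈ s, g μ := by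
  classical
  rw [← Finset.prod_sdiff hst]
  refine mul_le_of_le_one_left (Finset.prod_nonneg fun μ hμ => h0 μ (hst hμ)) ?_
  refine Finset.prod_le_one (fun μ hμ => h0 μ (Finset.mem_sdiff.1 hμ).1)
    (fun μ hμ => h1 μ (Finset.mem_sdiff.1 hμ).1 (Finset.mem_sdiff.1 hμ).2)

variable {G : Set V} {p : V → ℝ} {f : V → ℂ}

lemma fiberSup_ne_top (hfin : {a ∈ G | 0 < p a}.Finite) (μ : ℂ) :
    fiberSup G p f μ ≠ ⊤ := by
  classical
  have hMlt : hfin.toFinset.sup (fun a => ENNReal.ofReal (p a)) < ⊤ :=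
    (Finset.sup_lt_iff (by simp : (⊥:ℝ≥0∞) < ⊤)).2 fun a _ => ENNReal.ofReal_lt_top
  have hle : fiberSup G p f μ ≤ hfin.toFinset.sup (fun a => ENNReal.ofReal (p a)) := by
    refine iSup₂_le fun a ha => ?_
    by_cases hpa : 0 < p a
    · exact Finset.le_sup (f := fun a => ENNReal.ofReal (p a)) (hfin.mem_toFinset.2 ⟨ha.1, hpa⟩)
    · rw [ENNReal.ofReal_eq_zero.2 (le_of_not_gt hpa)]; exact zero_le
  exact (lt_of_le_of_lt hle hMlt).ne

lemma minTerm_eq (hfin : {a ∈ G | 0 < p a}.Finite) (μ : ℂ) :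
    minTerm G p f μ = ‖μ‖ ^ (fiberSup G p f μ).toReal :=
  if_neg (fiberSup_ne_top hfin μ)

lemma minTerm_nonneg (G : Set V) (p : V → ℝ) (f : V → ℂ) (μ : ℂ) :
    0 ≤ minTerm G p f μ := by
  rw [minTerm]
  split
  · exact le_rfl
  · exact Real.rpow_nonneg (norm_nonneg μ) _

lemma minTerm_le_one (hfin : {a ∈ G | 0 < p a}.Finite) {μ : ℂ} (hμ : ‖μ‖ ≤ 1) :
    minTerm G p f μ ≤ 1 := by
  rw [minTerm_eq hfin]
  exact Real.rpow_le_one (norm_nonneg μ) hμ ENNReal.toReal_nonneg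

lemma minTerm_eq_one (hfin : {a ∈ G | 0 < p a}.Finite) {μ : ℂ}
    (h : ∀ a ∈ G, f a = μ → ¬0 < p a) : minTerm G p f μ = 1 := by
  have hzero : fiberSup G p f μ = 0 := by
    refine le_antisymm (iSup₂_le fun a ha => ?_) zero_le
    rw [ENNReal.ofReal_eq_zero.2 (le_of_not_gt (h a ha.1 ha.2))]
  rw [minTerm_eq hfin, hzero]
  simp [Real.rpow_zero]

lemma infProd_eq_finset (hfin : {a ∈ G | 0 < p a}.Finite) (hmaps : MapsTo f G discE) :
    infProd (f '' G) (minTerm G p f) = ∏ μ ∈ hfin.toFinset.image f, minTerm G p f μ := by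
  classical
  set T : Finset ℂ := hfin.toFinset.image f with hT
  have hTsub : ↑T ⊆ f '' G := by
    intro μ hμ
    rw [hT] at hμ
    simp only [Finset.coe_image, Set.mem_image, Finset.mem_coe] at hμ
    obtain ⟨a, ha, rfl⟩ := hμ
    exact ⟨a, (hfin.mem_toFinset.1 ha).1, rfl⟩
  have habs : ∀ μ ∈ f '' G, ‖μ‖ ≤ 1 := by
    rintro μ ⟨a, haG, rfl⟩
    exact le_of_lt (hmaps haG)
  have hbdd : BddBelow {r : ℝ | ∃ B : Finset ℂ, ↑B ⊆ f '' G ∧ r = ∏ a ∈ B, minTerm G p f a} := by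
    refine ⟨0, ?_⟩
    rintro r ⟨B, hB, rfl⟩
    exact Finset.prod_nonneg fun μ _ => minTerm_nonneg G p f μ
  refine le_antisymm (csInf_le hbdd ⟨T, hTsub, rfl⟩) (le_csInf ⟨1, ∅, by simp⟩ ?_)
  rintro r ⟨B, hBsub, rfl⟩
  -- ∏ T ≤ ∏ B
  have hBdiff : ∀ μ ∈ B \ T, minTerm G p f μ = 1 := by
    intro μ hμ
    rw [Finset.mem_sdiff] at hμ
    refine minTerm_eq_one hfin fun a haG hfa hpa => hμ.2 ?_
    rw [hT, Finset.mem_image]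
    exact ⟨a, hfin.mem_toFinset.2 ⟨haG, hpa⟩, hfa⟩
  have hsplit : ∏ μ ∈ B, minTerm G p f μ = ∏ μ ∈ B ∩ T, minTerm G p f μ := by
    rw [← Finset.prod_inter_mul_prod_diff B T]
    rw [Finset.prod_congr rfl hBdiff, Finset.prod_const_one, mul_one]
  rw [hsplit]
  refine prod_le_prod_of_subset' (Finset.inter_subset_right)
    (fun μ hμ => minTerm_nonneg G p f μ) (fun μ hμ _ => minTerm_le_one hfin (habs μ (hTsub hμ)))

end ProdLemmas
end AuxProd

/-- existence of extremal functions -/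
theorem stmt_17 {n : ℕ} (G : Set (Fin n → ℂ)) (hG : IsDom G)
    (p : (Fin n → ℂ) → ℝ) (hp : ∀ a, 0 ≤ p a) (hfin : {a ∈ G | 0 < p a}.Finite)
    (z₀ : Fin n → ℂ) (hz₀ : z₀ ∈ G) :
    ∃ f : (Fin n → ℂ) → ℂ, DifferentiableOn ℂ f G ∧ MapsTo f G discE ∧ f z₀ = 0 ∧
      infProd (f '' G) (minTerm G p f) = dMin G p z₀ := by
  classical
  obtain ⟨hGo, hGconn⟩ := hG
  have hSfinG : ∀ a ∈ hfin.toFinset, a ∈ G := fun a ha => (hfin.mem_toFinset.1 ha).1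
  have hSfinp : ∀ a ∈ hfin.toFinset, 0 < p a := fun a ha => (hfin.mem_toFinset.1 ha).2
  set Sv : Set ℝ := {r : ℝ | ∃ f : (Fin n → ℂ) → ℂ, DifferentiableOn ℂ f G ∧
    MapsTo f G discE ∧ f z₀ = 0 ∧ r = infProd (f '' G) (minTerm G p f)} with hSv
  have hdMin : dMin G p z₀ = sSup Sv := rfl
  have hSvne : Sv.Nonempty := by
    refine ⟨_, ⟨(fun _ => 0), differentiableOn_const 0, fun z _ => ?_, rfl, rfl⟩⟩
    simp [discE]
  have hinf_le_one : ∀ g : (Fin n → ℂ) → ℂ, infProd (g '' G) (minTerm G p g) ≤ 1 := by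
    intro g
    have hb : BddBelow {r : ℝ | ∃ B : Finset ℂ, ↑B ⊆ g '' G ∧ r = ∏ a ∈ B, minTerm G p g a} := by
      refine ⟨0, ?_⟩
      rintro r ⟨B, _, rfl⟩
      exact Finset.prod_nonneg fun μ _ => minTerm_nonneg G p g μ
    have h1 : (1:ℝ) ∈ {r : ℝ | ∃ B : Finset ℂ, ↑B ⊆ g '' G ∧ r = ∏ a ∈ B, minTerm G p g a} :=
      ⟨∅, by simp, by simp⟩
    have := csInf_le hb h1
    simpa [infProd] using this
  have hSvbdd : BddAbove Sv := by
    refine ⟨1, ?_⟩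
    rintro r ⟨g, _, _, _, rfl⟩
    exact hinf_le_one g
  -- the maximizing sequence
  have hFex : ∀ k : ℕ, ∃ f : (Fin n → ℂ) → ℂ,
      (DifferentiableOn ℂ f G ∧ MapsTo f G discE ∧ f z₀ = 0) ∧
      dMin G p z₀ - 1 / ((k : ℝ) + 1) < infProd (f '' G) (minTerm G p f) := by
    intro k
    have hlt : dMin G p z₀ - 1 / ((k : ℝ) + 1) < sSup Sv := by
      rw [← hdMin]
      have : (0:ℝ) < 1 / ((k : ℝ) + 1) := by positivity
      linarith
    obtain ⟨r, hrSv, hr⟩ := exists_lt_of_lt_csSup hSvne hlt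
    obtain ⟨g, h1, h2, h3, rfl⟩ := hrSv
    exact ⟨g, ⟨h1, h2, h3⟩, hr⟩
  choose F hFadm hFgt using hFex
  set U : Ultrafilter ℕ := Ultrafilter.of atTop with hU
  have hUle : (U : Filter ℕ) ≤ atTop := Ultrafilter.of_le _
  have hbF : ∀ k, ∀ z ∈ G, ‖F k z‖ ≤ 1 := by
    intro k z hz
    have := (hFadm k).2.1 hz
    rw [discE, mem_setOf_eq] at this
    exact this.le
  obtain ⟨f, hfd, hfb, hfl⟩ := montel_limit hGo U F (fun k => (hFadm k).1) hbF
  have hfz₀ : f z₀ = 0 := by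
    have h1 : Tendsto (fun k => F k z₀) (U : Filter ℕ) (𝓝 (0:ℂ)) := by
      have he : (fun k => F k z₀) = fun _ => (0:ℂ) := funext fun k => (hFadm k).2.2
      rw [he]
      exact tendsto_const_nhds
    exact tendsto_nhds_unique (hfl z₀ hz₀) h1
  have hfmaps : MapsTo f G discE := by
    intro w hw
    by_contra hcon
    have h1 : ‖f w‖ = 1 := by
      refine le_antisymm (hfb w hw) ?_
      rw [discE, mem_setOf_eq, not_lt] at hcon
      exact hcon
    have hmax : IsMaxOn (norm ∘ f) G w := by
      refine isMaxOn_iff.2 fun x hx => ?_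
      simp only [Function.comp_apply, h1]
      exact hfb x hx
    have h2 := Complex.norm_eqOn_of_isPreconnected_of_isMaxOn hGconn.isPreconnected hGo hfd hw
      hmax hz₀
    simp only [Function.comp_apply, Function.const_apply, hfz₀, norm_zero] at h2
    rw [← h2] at h1
    norm_num at h1
  refine ⟨f, hfd, hfmaps, hfz₀, ?_⟩
  have hle : infProd (f '' G) (minTerm G p f) ≤ dMin G p z₀ := by
    rw [hdMin]
    exact le_csSup hSvbdd ⟨f, hfd, hfmaps, hfz₀, rfl⟩
  refine le_antisymm hle ?_
  -- choose argmax representatives over each fiber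
  have hrepex : ∀ μ ∈ hfin.toFinset.image f, ∃ a, a ∈ hfin.toFinset ∧ f a = μ ∧
      ∀ b ∈ hfin.toFinset, f b = μ → p b ≤ p a := by
    intro μ hμ
    obtain ⟨a₀, ha₀, hfa₀⟩ := Finset.mem_image.1 hμ
    obtain ⟨a, haQ, hamax⟩ := Finset.exists_max_image (hfin.toFinset.filter fun b => f b = μ) p
      ⟨a₀, Finset.mem_filter.2 ⟨ha₀, hfa₀⟩⟩
    rw [Finset.mem_filter] at haQ
    exact ⟨a, haQ.1, haQ.2, fun b hb hfb => hamax b (Finset.mem_filter.2 ⟨hb, hfb⟩)⟩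
  choose! rep hrep1 hrep2 hrep3 using hrepex
  set R : Finset (Fin n → ℂ) := (hfin.toFinset.image f).image rep with hR
  have hRsub : R ⊆ hfin.toFinset := by
    intro a ha
    obtain ⟨μ, hμ, rfl⟩ := Finset.mem_image.1 ha
    exact hrep1 μ hμ
  have hRG : ∀ a ∈ R, a ∈ G := fun a ha => hSfinG a (hRsub ha)
  have hRp : ∀ a ∈ R, 0 < p a := fun a ha => hSfinp a (hRsub ha)
  -- the limit functional value as a finite product over R
  have hfib : ∀ μ ∈ hfin.toFinset.image f,
      fiberSup G p f μ = ENNReal.ofReal (p (rep μ)) := by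
    intro μ hμ
    refine le_antisymm (iSup₂_le fun a ha => ?_) ?_
    · by_cases hpa : 0 < p a
      · exact ENNReal.ofReal_le_ofReal (hrep3 μ hμ a (hfin.mem_toFinset.2 ⟨ha.1, hpa⟩) ha.2)
      · rw [ENNReal.ofReal_eq_zero.2 (le_of_not_gt hpa)]
        exact zero_le
    · exact le_iSup₂ (f := fun (b : Fin n → ℂ) (_ : b ∈ {b ∈ G | f b = μ}) =>
        ENNReal.ofReal (p b)) (rep μ) ⟨hSfinG _ (hrep1 μ hμ), hrep2 μ hμ⟩
  have hrepinj : ∀ μ ∈ hfin.toFinset.image f, ∀ ν ∈ hfin.toFinset.image f,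
      rep μ = rep ν → μ = ν := by
    intro μ hμ ν hν h
    rw [← hrep2 μ hμ, ← hrep2 ν hν, h]
  have hval : infProd (f '' G) (minTerm G p f) = ∏ a ∈ R, ‖f a‖ ^ (p a) := by
    rw [infProd_eq_finset hfin hfmaps]
    have h1 : ∀ μ ∈ hfin.toFinset.image f,
        minTerm G p f μ = ‖μ‖ ^ (p (rep μ)) := by
      intro μ hμ
      rw [minTerm_eq hfin, hfib μ hμ, ENNReal.toReal_ofReal (hp _)]
    rw [Finset.prod_congr rfl h1, hR, Finset.prod_image hrepinj]
    exact Finset.prod_congr rfl fun μ hμ => by rw [hrep2 μ hμ]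
  -- convergence of the values
  have hrle : ∀ k, infProd (F k '' G) (minTerm G p (F k)) ≤ dMin G p z₀ := by
    intro k
    rw [hdMin]
    exact le_csSup hSvbdd ⟨F k, (hFadm k).1, (hFadm k).2.1, (hFadm k).2.2, rfl⟩
  have hrtend : Tendsto (fun k => infProd (F k '' G) (minTerm G p (F k))) (U : Filter ℕ)
      (𝓝 (dMin G p z₀)) := by
    have hlow : Tendsto (fun k : ℕ => dMin G p z₀ - 1 / ((k : ℝ) + 1)) atTop
        (𝓝 (dMin G p z₀)) := by
      have h0 : Tendsto (fun k : ℕ => 1 / ((k : ℝ) + 1)) atTop (𝓝 0) :=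
        tendsto_one_div_add_atTop_nhds_zero_nat
      simpa using tendsto_const_nhds.sub h0
    exact tendsto_of_tendsto_of_tendsto_of_le_of_le (hlow.mono_left hUle) tendsto_const_nhds
      (fun k => (hFgt k).le) hrle
  have hprodtend : Tendsto (fun k => ∏ a ∈ R, ‖F k a‖ ^ (p a)) (U : Filter ℕ)
      (𝓝 (∏ a ∈ R, ‖f a‖ ^ (p a))) := by
    refine tendsto_finset_prod _ fun a ha => ?_
    have h1 : Tendsto (fun k => ‖F k a‖) (U : Filter ℕ)
        (𝓝 (‖f a‖)) := by
      have := (hfl a (hRG a ha)).norm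
      simpa using this
    exact (Real.continuousAt_rpow_const _ (p a) (Or.inr (hp a))).tendsto.comp h1
  -- eventual injectivity on R
  have hinj_ev : ∀ᶠ k in (U : Filter ℕ), ∀ a ∈ (R : Set (Fin n → ℂ)),
      ∀ b ∈ (R : Set (Fin n → ℂ)), a ≠ b → F k a ≠ F k b := by
    refine (R.finite_toSet.eventually_all).2 fun a ha => ?_
    refine (R.finite_toSet.eventually_all).2 fun b hb => ?_
    rcases eq_or_ne a b with rfl | hab
    · exact Eventually.of_forall fun k h => absurd rfl h
    · have hfab : f a ≠ f b := by
        intro heq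
        obtain ⟨μ, hμ, rfl⟩ := Finset.mem_image.1 (Finset.mem_coe.1 ha)
        obtain ⟨ν, hν, rfl⟩ := Finset.mem_image.1 (Finset.mem_coe.1 hb)
        rw [hrep2 μ hμ, hrep2 ν hν] at heq
        exact hab (heq ▸ rfl)
      have hd : 0 < dist (f a) (f b) := dist_pos.2 hfab
      have h1 := Metric.tendsto_nhds.1 (hfl a (hRG a (Finset.mem_coe.1 ha))) _ (half_pos hd)
      have h2 := Metric.tendsto_nhds.1 (hfl b (hRG b (Finset.mem_coe.1 hb))) _ (half_pos hd)
      filter_upwards [h1, h2] with k hk1 hk2 _ heq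
      have : dist (f a) (f b) ≤ dist (F k a) (f a) + dist (F k b) (f b) := by
        calc dist (f a) (f b) ≤ dist (f a) (F k a) + dist (F k a) (f b) := dist_triangle _ _ _
          _ = dist (F k a) (f a) + dist (F k b) (f b) := by rw [dist_comm (f a), heq]
      linarith
  have hineq_ev : ∀ᶠ k in (U : Filter ℕ),
      infProd (F k '' G) (minTerm G p (F k)) ≤ ∏ a ∈ R, ‖F k a‖ ^ (p a) := by
    refine hinj_ev.mono fun k hk => ?_
    have hkinj : ∀ x ∈ R, ∀ y ∈ R, F k x = F k y → x = y := by
      intro x hx y hy hxy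
      by_contra hne
      exact hk x (Finset.mem_coe.2 hx) y (Finset.mem_coe.2 hy) hne hxy
    rw [infProd_eq_finset hfin (hFadm k).2.1]
    have himg : ∀ μ ∈ hfin.toFinset.image (F k), ‖μ‖ ≤ 1 := by
      intro μ hμ
      obtain ⟨a, ha, rfl⟩ := Finset.mem_image.1 hμ
      exact ((hFadm k).2.1 (hSfinG a ha)).le
    calc ∏ μ ∈ hfin.toFinset.image (F k), minTerm G p (F k) μ
        ≤ ∏ μ ∈ R.image (F k), minTerm G p (F k) μ := by
          refine prod_le_prod_of_subset' (Finset.image_subset_image hRsub)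
            (fun μ _ => minTerm_nonneg G p (F k) μ)
            (fun μ hμ _ => minTerm_le_one hfin (himg μ hμ))
      _ = ∏ a ∈ R, minTerm G p (F k) (F k a) := Finset.prod_image hkinj
      _ ≤ ∏ a ∈ R, ‖F k a‖ ^ (p a) := by
          refine Finset.prod_le_prod (fun a _ => minTerm_nonneg G p (F k) (F k a))
            fun a ha => ?_
          rw [minTerm_eq hfin]
          have hExp : p a ≤ (fiberSup G p (F k) (F k a)).toReal := by
            have h1 : ENNReal.ofReal (p a) ≤ fiberSup G p (F k) (F k a) :=
              le_iSup₂ (f := fun (b : Fin n → ℂ) (_ : b ∈ {b ∈ G | F k b = F k a}) =>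
                ENNReal.ofReal (p b)) a ⟨hRG a ha, rfl⟩
            have h2 := ENNReal.toReal_mono (fiberSup_ne_top hfin _) h1
            rwa [ENNReal.toReal_ofReal (hp a)] at h2
          rcases eq_or_lt_of_le (norm_nonneg (F k a)) with h0 | h0
          · rw [← h0, Real.zero_rpow (ne_of_gt (lt_of_lt_of_le (hRp a ha) hExp)),
              Real.zero_rpow (ne_of_gt (hRp a ha))]
          · exact Real.rpow_le_rpow_of_exponent_ge h0 ((hFadm k).2.1 (hRG a ha)).le hExp
  have hfinal : dMin G p z₀ ≤ ∏ a ∈ R, ‖f a‖ ^ (p a) :=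
    le_of_tendsto_of_tendsto hrtend hprodtend hineq_ev
  rw [hval]
  exact hfinal
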